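/- Under the listed assumptions, the entrywise square of the leverage-score matrix is Lipschitz: ‖σ^{∘2}_{*,*}(x) − σ^{∘2}_{*,*}(x̂)‖ ≤ 6 β^{-7} R³ · ‖x − x̂‖₂. -/

import Mathlib

open Matrix

/-- The Euclidean (`ℓ₂`) norm of a vector in `ℝ^n`. -/
noncomputable def evnorm {n : ℕ} (v : Fin n → ℝ) : ℝ := Real.sqrt (∑ i, v i ^ 2)

/-- The spectral norm of a matrix: the operator norm of the induced linear map between
Euclidean spaces. -/
noncomputable def spnorm {m n : ℕ} (M : Matrix (Fin m) (Fin n) ℝ) : ℝ :=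
  ‖LinearMap.toContinuousLinearMap (Matrix.toEuclideanLin M)‖

lemma evnorm_eq {n : ℕ} (v : Fin n → ℝ) :
    evnorm v = ‖(WithLp.equiv 2 (Fin n → ℝ)).symm v‖ := by
  rw [EuclideanSpace.norm_eq, evnorm]
  congr 1; apply Finset.sum_congr rfl; intro i _
  simp [Real.norm_eq_abs, sq_abs]

lemma evnorm_nonneg {n : ℕ} (v : Fin n → ℝ) : 0 ≤ evnorm v := Real.sqrt_nonneg _

lemma spnorm_nonneg {m n : ℕ} (M : Matrix (Fin m) (Fin n) ℝ) : 0 ≤ spnorm M := norm_nonneg _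

lemma mulVec_evnorm_le {m n : ℕ} (M : Matrix (Fin m) (Fin n) ℝ) (v : Fin n → ℝ) :
    evnorm (M.mulVec v) ≤ spnorm M * evnorm v := by
  rw [evnorm_eq, evnorm_eq]
  exact (LinearMap.toContinuousLinearMap (Matrix.toEuclideanLin M)).le_opNorm ((WithLp.equiv 2 (Fin n → ℝ)).symm v)

lemma spnorm_le {m n : ℕ} (M : Matrix (Fin m) (Fin n) ℝ) (c : ℝ) (hc : 0 ≤ c)
    (h : ∀ v, evnorm (M.mulVec v) ≤ c * evnorm v) : spnorm M ≤ c := by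
  apply ContinuousLinearMap.opNorm_le_bound _ hc
  intro v
  have := h (WithLp.equiv 2 (Fin n → ℝ) v)
  rw [evnorm_eq, evnorm_eq] at this
  simpa [Matrix.toEuclideanLin_apply] using this

lemma evnorm_sq {n : ℕ} (v : Fin n → ℝ) : evnorm v ^ 2 = v ⬝ᵥ v := by
  rw [evnorm, Real.sq_sqrt (by positivity)]
  simp [dotProduct, sq]

lemma dot_cs {n : ℕ} (u w : Fin n → ℝ) : |u ⬝ᵥ w| ≤ evnorm u * evnorm w := by
  have h := abs_real_inner_le_norm ((WithLp.equiv 2 (Fin n → ℝ)).symm u)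
    ((WithLp.equiv 2 (Fin n → ℝ)).symm w)
  rw [← evnorm_eq, ← evnorm_eq] at h
  simpa [PiLp.inner_apply, dotProduct, RCLike.inner_apply, mul_comm] using h

lemma spnorm_mul_le {m n k : ℕ} (M : Matrix (Fin m) (Fin n) ℝ) (N : Matrix (Fin n) (Fin k) ℝ) :
    spnorm (M * N) ≤ spnorm M * spnorm N := by
  apply spnorm_le _ _ (mul_nonneg (spnorm_nonneg M) (spnorm_nonneg N))
  intro v
  rw [← Matrix.mulVec_mulVec]
  calc evnorm (M.mulVec (N.mulVec v)) ≤ spnorm M * evnorm (N.mulVec v) := mulVec_evnorm_le _ _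
    _ ≤ spnorm M * (spnorm N * evnorm v) :=
      mul_le_mul_of_nonneg_left (mulVec_evnorm_le _ _) (spnorm_nonneg M)
    _ = spnorm M * spnorm N * evnorm v := by ring

lemma spnorm_transpose_le {m n : ℕ} (M : Matrix (Fin m) (Fin n) ℝ) :
    spnorm Mᵀ ≤ spnorm M := by
  apply spnorm_le _ _ (spnorm_nonneg M)
  intro v
  have h2 : evnorm (Mᵀ.mulVec v) ^ 2 ≤ evnorm v * (spnorm M * evnorm (Mᵀ.mulVec v)) := by
    rw [evnorm_sq]
    have key : Mᵀ.mulVec v ⬝ᵥ Mᵀ.mulVec v = v ⬝ᵥ M.mulVec (Mᵀ.mulVec v) := by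
      rw [Matrix.dotProduct_mulVec v M, ← Matrix.mulVec_transpose]
    rw [key]
    calc v ⬝ᵥ M.mulVec (Mᵀ.mulVec v) ≤ |v ⬝ᵥ M.mulVec (Mᵀ.mulVec v)| := le_abs_self _
      _ ≤ evnorm v * evnorm (M.mulVec (Mᵀ.mulVec v)) := dot_cs _ _
      _ ≤ evnorm v * (spnorm M * evnorm (Mᵀ.mulVec v)) :=
        mul_le_mul_of_nonneg_left (mulVec_evnorm_le _ _) (evnorm_nonneg _)
  rcases eq_or_lt_of_le (evnorm_nonneg (Mᵀ.mulVec v)) with h | h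
  · rw [← h]; exact mul_nonneg (spnorm_nonneg M) (evnorm_nonneg v)
  · nlinarith [evnorm_nonneg v, spnorm_nonneg M]

lemma spnorm_transpose {m n : ℕ} (M : Matrix (Fin m) (Fin n) ℝ) : spnorm Mᵀ = spnorm M :=
  le_antisymm (spnorm_transpose_le M) (by simpa using spnorm_transpose_le Mᵀ)

lemma spnorm_sub_le {m n : ℕ} (M N : Matrix (Fin m) (Fin n) ℝ) :
    spnorm (M - N) ≤ spnorm M + spnorm N := by
  unfold spnorm
  rw [map_sub, map_sub]
  exact norm_sub_le _ _

lemma spnorm_diagonal_le {n : ℕ} (v : Fin n → ℝ) (c : ℝ) (hc : 0 ≤ c) (h : ∀ i, |v i| ≤ c) :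
    spnorm (Matrix.diagonal v) ≤ c := by
  apply spnorm_le _ _ hc
  intro w
  rw [evnorm, evnorm]
  rw [← Real.sqrt_sq hc, ← Real.sqrt_mul (by positivity)]
  apply Real.sqrt_le_sqrt
  rw [Finset.mul_sum]
  apply Finset.sum_le_sum
  intro i _
  rw [Matrix.mulVec_diagonal]
  have h1 : v i ^ 2 ≤ c ^ 2 := by nlinarith [h i, sq_abs (v i), abs_nonneg (v i)]
  nlinarith [sq_nonneg (w i)]

lemma triple_sum {n : ℕ} (f : Fin n → Fin n → Fin n → ℝ) :
    ∑ k, ∑ i, ∑ j, f i j k = ∑ i, ∑ j, ∑ k, f i j k := by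
  rw [Finset.sum_comm]
  exact Finset.sum_congr rfl fun i _ => Finset.sum_comm ..

lemma hadamard_exchange {n : ℕ} (A W : Matrix (Fin n) (Fin n) ℝ) (u v : Fin n → ℝ) :
    u ⬝ᵥ (Matrix.hadamard A (W * Wᵀ)).mulVec v
      = ∑ k, ((fun i => u i * W i k) ⬝ᵥ A.mulVec (fun j => v j * W j k)) := by
  simp only [dotProduct, Matrix.mulVec, Matrix.hadamard, Matrix.mul_apply,
    Matrix.transpose_apply, Matrix.of_apply, Finset.mul_sum, Finset.sum_mul]
  conv_rhs => rw [triple_sum]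
  apply Finset.sum_congr rfl; intro i _
  apply Finset.sum_congr rfl; intro j _
  apply Finset.sum_congr rfl; intro k _
  ring

lemma schur_had {n : ℕ} (A W : Matrix (Fin n) (Fin n) ℝ) (t : ℝ) (ht : 0 ≤ t)
    (hW : ∀ i, ∑ k, W i k ^ 2 ≤ t) :
    spnorm (Matrix.hadamard A (W * Wᵀ)) ≤ spnorm A * t := by
  have hA := spnorm_nonneg A
  have bil : ∀ u v : Fin n → ℝ, |u ⬝ᵥ (Matrix.hadamard A (W * Wᵀ)).mulVec v|
      ≤ spnorm A * t * (evnorm u * evnorm v) := by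
    intro u v
    rw [hadamard_exchange]
    set a : Fin n → ℝ := fun k => evnorm (fun i => u i * W i k) with ha
    set bb : Fin n → ℝ := fun k => evnorm (fun j => v j * W j k) with hb
    have step1 : |∑ k, ((fun i => u i * W i k) ⬝ᵥ A.mulVec (fun j => v j * W j k))|
        ≤ spnorm A * ∑ k, a k * bb k := by
      calc |∑ k, ((fun i => u i * W i k) ⬝ᵥ A.mulVec (fun j => v j * W j k))|
          ≤ ∑ k, |(fun i => u i * W i k) ⬝ᵥ A.mulVec (fun j => v j * W j k)| :=
            Finset.abs_sum_le_sum_abs _ _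
        _ ≤ ∑ k, a k * (spnorm A * bb k) := by
            apply Finset.sum_le_sum
            intro k _
            calc |(fun i => u i * W i k) ⬝ᵥ A.mulVec (fun j => v j * W j k)|
                ≤ a k * evnorm (A.mulVec (fun j => v j * W j k)) := dot_cs _ _
              _ ≤ a k * (spnorm A * bb k) :=
                  mul_le_mul_of_nonneg_left (mulVec_evnorm_le _ _) (evnorm_nonneg _)
        _ = spnorm A * ∑ k, a k * bb k := by
            rw [Finset.mul_sum]; apply Finset.sum_congr rfl; intro k _; ring
    have ha2 : ∑ k, a k ^ 2 ≤ t * evnorm u ^ 2 := by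
      have : ∀ k, a k ^ 2 = ∑ i, u i ^ 2 * W i k ^ 2 := by
        intro k
        rw [ha, evnorm_sq]
        simp [dotProduct]; apply Finset.sum_congr rfl; intro i _; ring
      simp_rw [this]
      rw [Finset.sum_comm, evnorm_sq]
      calc ∑ i, ∑ k, u i ^ 2 * W i k ^ 2 = ∑ i, u i ^ 2 * ∑ k, W i k ^ 2 := by
            apply Finset.sum_congr rfl; intro i _; rw [Finset.mul_sum]
        _ ≤ ∑ i, u i ^ 2 * t := by
            apply Finset.sum_le_sum; intro i _
            exact mul_le_mul_of_nonneg_left (hW i) (sq_nonneg _)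
        _ = t * (u ⬝ᵥ u) := by
            rw [dotProduct, Finset.mul_sum]
            apply Finset.sum_congr rfl; intro i _; ring
    have hb2 : ∑ k, bb k ^ 2 ≤ t * evnorm v ^ 2 := by
      have : ∀ k, bb k ^ 2 = ∑ i, v i ^ 2 * W i k ^ 2 := by
        intro k
        rw [hb, evnorm_sq]
        simp [dotProduct]; apply Finset.sum_congr rfl; intro i _; ring
      simp_rw [this]
      rw [Finset.sum_comm, evnorm_sq]
      calc ∑ i, ∑ k, v i ^ 2 * W i k ^ 2 = ∑ i, v i ^ 2 * ∑ k, W i k ^ 2 := by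
            apply Finset.sum_congr rfl; intro i _; rw [Finset.mul_sum]
        _ ≤ ∑ i, v i ^ 2 * t := by
            apply Finset.sum_le_sum; intro i _
            exact mul_le_mul_of_nonneg_left (hW i) (sq_nonneg _)
        _ = t * (v ⬝ᵥ v) := by
            rw [dotProduct, Finset.mul_sum]
            apply Finset.sum_congr rfl; intro i _; ring
    have cs : ∑ k, a k * bb k ≤ t * (evnorm u * evnorm v) := by
      have h1 : (∑ k, a k * bb k) ^ 2 ≤ (∑ k, a k ^ 2) * ∑ k, bb k ^ 2 :=
        Finset.sum_mul_sq_le_sq_mul_sq _ _ _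
      have h2 : (∑ k, a k * bb k) ^ 2 ≤ (t * (evnorm u * evnorm v)) ^ 2 := by
        calc (∑ k, a k * bb k) ^ 2 ≤ (∑ k, a k ^ 2) * ∑ k, bb k ^ 2 := h1
          _ ≤ (t * evnorm u ^ 2) * (t * evnorm v ^ 2) := by
              apply mul_le_mul ha2 hb2 (Finset.sum_nonneg fun k _ => sq_nonneg _) (by positivity)
          _ = (t * (evnorm u * evnorm v)) ^ 2 := by ring
      have h3 : 0 ≤ ∑ k, a k * bb k :=
        Finset.sum_nonneg fun k _ => mul_nonneg (evnorm_nonneg _) (evnorm_nonneg _)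
      have h4 : 0 ≤ t * (evnorm u * evnorm v) := by
        have := evnorm_nonneg u; have := evnorm_nonneg v; positivity
      nlinarith
    calc |∑ k, ((fun i => u i * W i k) ⬝ᵥ A.mulVec (fun j => v j * W j k))|
        ≤ spnorm A * ∑ k, a k * bb k := step1
      _ ≤ spnorm A * (t * (evnorm u * evnorm v)) := mul_le_mul_of_nonneg_left cs hA
      _ = spnorm A * t * (evnorm u * evnorm v) := by ring
  apply spnorm_le _ _ (by positivity)
  intro v
  set C := Matrix.hadamard A (W * Wᵀ) with hC
  have h2 : evnorm (C.mulVec v) ^ 2 ≤ spnorm A * t * (evnorm (C.mulVec v) * evnorm v) := by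
    rw [evnorm_sq]
    calc C.mulVec v ⬝ᵥ C.mulVec v ≤ |C.mulVec v ⬝ᵥ C.mulVec v| := le_abs_self _
      _ ≤ spnorm A * t * (evnorm (C.mulVec v) * evnorm v) := bil _ _
  rcases eq_or_lt_of_le (evnorm_nonneg (C.mulVec v)) with h | h
  · rw [← h]; have := evnorm_nonneg v; positivity
  · nlinarith [evnorm_nonneg v]

section projsec
variable {n d : ℕ}

noncomputable def pinv (M : Matrix (Fin n) (Fin d) ℝ) : Matrix (Fin d) (Fin n) ℝ :=
  (Mᵀ * M)⁻¹ * Mᵀ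

noncomputable def projM (M : Matrix (Fin n) (Fin d) ℝ) : Matrix (Fin n) (Fin n) ℝ :=
  M * (Mᵀ * M)⁻¹ * Mᵀ

variable (M : Matrix (Fin n) (Fin d) ℝ)

lemma projM_eq : projM M = M * pinv M := by rw [projM, pinv, Matrix.mul_assoc]

lemma gram_inv_symm : ((Mᵀ * M)⁻¹)ᵀ = (Mᵀ * M)⁻¹ := by
  rw [Matrix.transpose_nonsing_inv, Matrix.transpose_mul, Matrix.transpose_transpose]

lemma projM_symm : (projM M)ᵀ = projM M := by
  rw [projM, Matrix.transpose_mul, Matrix.transpose_mul, Matrix.transpose_transpose,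
    gram_inv_symm, Matrix.mul_assoc]

lemma projM_mul_M (h : IsUnit (Mᵀ * M).det) : projM M * M = M := by
  rw [projM, Matrix.mul_assoc, Matrix.mul_assoc,
    Matrix.nonsing_inv_mul _ h, Matrix.mul_one]

lemma MT_mul_projM (h : IsUnit (Mᵀ * M).det) : Mᵀ * projM M = Mᵀ := by
  have := congrArg Matrix.transpose (projM_mul_M M h)
  rwa [Matrix.transpose_mul, projM_symm] at this

lemma projM_idem (h : IsUnit (Mᵀ * M).det) : projM M * projM M = projM M := by
  calc projM M * projM M = M * (Mᵀ * M)⁻¹ * (Mᵀ * projM M) := by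
        rw [projM, Matrix.mul_assoc]
    _ = projM M := by rw [MT_mul_projM M h, projM]

end projsec

lemma evnorm_single {n : ℕ} (i : Fin n) : evnorm (Pi.single i 1 : Fin n → ℝ) = 1 := by
  rw [evnorm]
  have : ∑ j, (Pi.single i 1 : Fin n → ℝ) j ^ 2 = 1 := by
    rw [Finset.sum_eq_single i]
    · simp
    · intro j _ hj; simp [Pi.single_apply, hj]
    · simp
  rw [this, Real.sqrt_one]

lemma entry_le_evnorm {n : ℕ} (w : Fin n → ℝ) (i : Fin n) : |w i| ≤ evnorm w := by
  rw [evnorm, ← Real.sqrt_sq_eq_abs]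
  apply Real.sqrt_le_sqrt
  exact Finset.single_le_sum (fun j _ => sq_nonneg (w j)) (Finset.mem_univ i)

lemma sym_idem_spnorm {n : ℕ} (P : Matrix (Fin n) (Fin n) ℝ)
    (hs : Pᵀ = P) (hi : P * P = P) : spnorm P ≤ 1 := by
  apply spnorm_le _ _ zero_le_one
  intro v
  have key : P.mulVec v ⬝ᵥ P.mulVec v = P.mulVec v ⬝ᵥ v := by
    conv_lhs => rw [Matrix.dotProduct_mulVec, ← Matrix.mulVec_transpose, hs,
      Matrix.mulVec_mulVec, hi]
  have h2 : evnorm (P.mulVec v) ^ 2 ≤ evnorm (P.mulVec v) * evnorm v := by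
    rw [evnorm_sq, key]
    exact le_trans (le_abs_self _) (dot_cs _ _)
  rcases eq_or_lt_of_le (evnorm_nonneg (P.mulVec v)) with h | h
  · rw [← h]; simpa using evnorm_nonneg v
  · nlinarith [evnorm_nonneg v]

lemma diag_entry_le_spnorm {n : ℕ} (P : Matrix (Fin n) (Fin n) ℝ) (i : Fin n) :
    P i i ≤ spnorm P := by
  have key : P i i = (Pi.single i 1 : Fin n → ℝ) ⬝ᵥ P.mulVec (Pi.single i 1) := by
    simp [Matrix.mulVec_single, dotProduct, Pi.single_apply]
  calc P i i ≤ |(Pi.single i 1 : Fin n → ℝ) ⬝ᵥ P.mulVec (Pi.single i 1)| := by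
        rw [← key]; exact le_abs_self _
    _ ≤ evnorm (Pi.single i 1 : Fin n → ℝ) * evnorm (P.mulVec (Pi.single i 1)) := dot_cs _ _
    _ ≤ 1 * (spnorm P * 1) := by
        rw [evnorm_single]
        refine mul_le_mul_of_nonneg_left ?_ zero_le_one
        calc evnorm (P.mulVec (Pi.single i 1)) ≤ spnorm P * evnorm (Pi.single i 1 : Fin n → ℝ) :=
              mulVec_evnorm_le _ _
          _ = spnorm P * 1 := by rw [evnorm_single]
    _ = spnorm P := by ring

lemma pinv_spnorm_le {n d : ℕ} (M : Matrix (Fin n) (Fin d) ℝ) (β : ℝ) (hβ : 0 < β)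
    (h : IsUnit (Mᵀ * M).det)
    (hmin : ∀ v : Fin d → ℝ, β * evnorm v ≤ evnorm (M.mulVec v)) :
    spnorm (pinv M) ≤ β⁻¹ := by
  apply spnorm_le _ _ (by positivity)
  intro w
  have h1 : β * evnorm ((pinv M).mulVec w) ≤ evnorm (M.mulVec ((pinv M).mulVec w)) := hmin _
  rw [Matrix.mulVec_mulVec, ← projM_eq] at h1
  have h2 : evnorm ((projM M).mulVec w) ≤ 1 * evnorm w := by
    calc evnorm ((projM M).mulVec w) ≤ spnorm (projM M) * evnorm w := mulVec_evnorm_le _ _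
      _ ≤ 1 * evnorm w := mul_le_mul_of_nonneg_right
          (sym_idem_spnorm _ (projM_symm M) (projM_idem M h)) (evnorm_nonneg _)
  rw [one_mul] at h2
  have h3 : β * evnorm ((pinv M).mulVec w) ≤ evnorm w := le_trans h1 h2
  calc evnorm ((pinv M).mulVec w) = β⁻¹ * (β * evnorm ((pinv M).mulVec w)) := by
        field_simp
    _ ≤ β⁻¹ * evnorm w := mul_le_mul_of_nonneg_left h3 (by positivity)

lemma proj_diff_bound {n d : ℕ} (M N : Matrix (Fin n) (Fin d) ℝ) (β : ℝ) (hβ : 0 < β)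
    (hM : IsUnit (Mᵀ * M).det) (hN : IsUnit (Nᵀ * N).det)
    (hminM : ∀ v : Fin d → ℝ, β * evnorm v ≤ evnorm (M.mulVec v))
    (hminN : ∀ v : Fin d → ℝ, β * evnorm v ≤ evnorm (N.mulVec v)) :
    spnorm (projM M - projM N) ≤ 2 * β⁻¹ * spnorm (M - N) := by
  have hNTQ : Nᵀ * (1 - projM N) = 0 := by
    rw [Matrix.mul_sub, Matrix.mul_one, MT_mul_projM N hN, sub_self]
  have hM0 : (1 - projM M) * M = 0 := by
    rw [Matrix.sub_mul, Matrix.one_mul, projM_mul_M M hM, sub_self]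
  have hPsym : (pinv M)ᵀ * Mᵀ = projM M := by
    rw [← Matrix.transpose_mul, ← projM_eq, projM_symm]
  have e1 : (pinv M)ᵀ * (M - N)ᵀ * (1 - projM N) = projM M * (1 - projM N) := by
    rw [Matrix.transpose_sub, Matrix.mul_sub ((pinv M)ᵀ) Mᵀ Nᵀ, Matrix.sub_mul, hPsym,
      Matrix.mul_assoc ((pinv M)ᵀ) Nᵀ (1 - projM N), hNTQ, Matrix.mul_zero, sub_zero]
  have e2 : (1 - projM M) * (N - M) * pinv N = (1 - projM M) * projM N := by
    rw [Matrix.mul_sub (1 - projM M) N M, Matrix.sub_mul,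
      hM0, Matrix.zero_mul, sub_zero, Matrix.mul_assoc, ← projM_eq]
  have iden : projM M - projM N
      = (pinv M)ᵀ * (M - N)ᵀ * (1 - projM N) - (1 - projM M) * (N - M) * pinv N := by
    rw [e1, e2]
    noncomm_ring
  have hβi : (0:ℝ) ≤ β⁻¹ := by positivity
  have hΔ : 0 ≤ spnorm (M - N) := spnorm_nonneg _
  have hNM : spnorm (N - M) = spnorm (M - N) := by
    rw [← neg_sub M N]
    unfold spnorm
    rw [map_neg, map_neg, norm_neg]
  have b1 : spnorm ((pinv M)ᵀ * (M - N)ᵀ * (1 - projM N)) ≤ β⁻¹ * spnorm (M - N) := by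
    calc spnorm ((pinv M)ᵀ * (M - N)ᵀ * (1 - projM N))
        ≤ spnorm ((pinv M)ᵀ * (M - N)ᵀ) * spnorm (1 - projM N) := spnorm_mul_le _ _
      _ ≤ spnorm ((pinv M)ᵀ * (M - N)ᵀ) * 1 := by
          refine mul_le_mul_of_nonneg_left ?_ (spnorm_nonneg _)
          apply sym_idem_spnorm
          · rw [Matrix.transpose_sub, Matrix.transpose_one, projM_symm]
          · simp only [Matrix.sub_mul, Matrix.mul_sub, Matrix.one_mul, Matrix.mul_one,
              projM_idem N hN]
            abel
      _ = spnorm ((pinv M)ᵀ * (M - N)ᵀ) := mul_one _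
      _ ≤ spnorm ((pinv M)ᵀ) * spnorm ((M - N)ᵀ) := spnorm_mul_le _ _
      _ = spnorm (pinv M) * spnorm (M - N) := by rw [spnorm_transpose, spnorm_transpose]
      _ ≤ β⁻¹ * spnorm (M - N) :=
          mul_le_mul_of_nonneg_right (pinv_spnorm_le M β hβ hM hminM) hΔ
  have b2 : spnorm ((1 - projM M) * (N - M) * pinv N) ≤ β⁻¹ * spnorm (M - N) := by
    calc spnorm ((1 - projM M) * (N - M) * pinv N)
        ≤ spnorm ((1 - projM M) * (N - M)) * spnorm (pinv N) := spnorm_mul_le _ _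
      _ ≤ spnorm ((1 - projM M) * (N - M)) * β⁻¹ :=
          mul_le_mul_of_nonneg_left (pinv_spnorm_le N β hβ hN hminN) (spnorm_nonneg _)
      _ ≤ (spnorm (1 - projM M) * spnorm (N - M)) * β⁻¹ :=
          mul_le_mul_of_nonneg_right (spnorm_mul_le _ _) hβi
      _ ≤ (1 * spnorm (N - M)) * β⁻¹ := by
          refine mul_le_mul_of_nonneg_right (mul_le_mul_of_nonneg_right ?_ (spnorm_nonneg _)) hβi
          apply sym_idem_spnorm
          · rw [Matrix.transpose_sub, Matrix.transpose_one, projM_symm]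
          · simp only [Matrix.sub_mul, Matrix.mul_sub, Matrix.one_mul, Matrix.mul_one,
              projM_idem M hM]
            abel
      _ = β⁻¹ * spnorm (M - N) := by rw [hNM]; ring
  calc spnorm (projM M - projM N)
      = spnorm ((pinv M)ᵀ * (M - N)ᵀ * (1 - projM N) - (1 - projM M) * (N - M) * pinv N) := by
        rw [← iden]
    _ ≤ spnorm ((pinv M)ᵀ * (M - N)ᵀ * (1 - projM N))
        + spnorm ((1 - projM M) * (N - M) * pinv N) := spnorm_sub_le _ _
    _ ≤ β⁻¹ * spnorm (M - N) + β⁻¹ * spnorm (M - N) := add_le_add b1 b2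
    _ = 2 * β⁻¹ * spnorm (M - N) := by ring
lemma diag_inv {n : ℕ} (s : Fin n → ℝ) (h : ∀ i, s i ≠ 0) :
    (Matrix.diagonal s)⁻¹ = Matrix.diagonal (fun i => (s i)⁻¹) := by
  apply Matrix.inv_eq_right_inv
  rw [Matrix.diagonal_mul_diagonal]
  have : (fun i => s i * (s i)⁻¹) = fun _ : Fin n => (1:ℝ) :=
    funext fun i => mul_inv_cancel₀ (h i)
  rw [this]
  exact Matrix.diagonal_one

lemma hadamard_decomp {n : ℕ} (P Q : Matrix (Fin n) (Fin n) ℝ) :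
    Matrix.hadamard P P - Matrix.hadamard Q Q
      = Matrix.hadamard (P - Q) P + Matrix.hadamard Q (P - Q) := by
  ext i j
  simp [Matrix.hadamard, Matrix.sub_apply, Matrix.add_apply]
  ring

lemma spnorm_add_le {m n : ℕ} (M N : Matrix (Fin m) (Fin n) ℝ) :
    spnorm (M + N) ≤ spnorm M + spnorm N := by
  unfold spnorm
  rw [map_add, map_add]
  exact norm_add_le _ _

/-- `s_x := A x - b`. -/
noncomputable def sVec {n d : ℕ} (A : Matrix (Fin n) (Fin d) ℝ) (b : Fin n → ℝ)
    (x : Fin d → ℝ) : Fin n → ℝ := A.mulVec x - b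

/-- `A_x := S_x⁻¹ A` where `S_x := diag(s_x)`. -/
noncomputable def matAx {n d : ℕ} (A : Matrix (Fin n) (Fin d) ℝ) (b : Fin n → ℝ)
    (x : Fin d → ℝ) : Matrix (Fin n) (Fin d) ℝ := (Matrix.diagonal (sVec A b x))⁻¹ * A

/-- The leverage-score matrix `σ_{*,*}(x) := A_x (A_xᵀ A_x)⁻¹ A_xᵀ`. -/
noncomputable def sigM {n d : ℕ} (A : Matrix (Fin n) (Fin d) ℝ) (b : Fin n → ℝ)
    (x : Fin d → ℝ) : Matrix (Fin n) (Fin n) ℝ :=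
  matAx A b x * ((matAx A b x)ᵀ * matAx A b x)⁻¹ * (matAx A b x)ᵀ

/-- Under the listed assumptions, the Hadamard square of the leverage-score matrix is
Lipschitz: `‖σ^{∘2}_{*,*}(x) − σ^{∘2}_{*,*}(x̂)‖ ≤ 6 β⁻⁷ R³ ‖x − x̂‖₂`. -/
theorem stmt14 {n d : ℕ} (hn : 0 < n) (hd : 0 < d)
    (A : Matrix (Fin n) (Fin d) ℝ) (b : Fin n → ℝ) (x xh : Fin d → ℝ) (β R : ℝ)
    (hβ0 : 0 < β) (hβ1 : β < 0.1) (hR : 0 < R)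
    (hsx : ∀ i, β ≤ |sVec A b x i|)
    (hsxh : ∀ i, β ≤ |sVec A b xh i|)
    (hrankx : IsUnit ((matAx A b x)ᵀ * matAx A b x).det)
    (hrankxh : IsUnit ((matAx A b xh)ᵀ * matAx A b xh).det)
    (hA : spnorm A ≤ R)
    (hclose : evnorm (A.mulVec (x - xh)) ≤ 0.01)
    (hminx : ∀ v : Fin d → ℝ, β * evnorm v ≤ evnorm ((matAx A b x).mulVec v))
    (hminxh : ∀ v : Fin d → ℝ, β * evnorm v ≤ evnorm ((matAx A b xh).mulVec v)) :
    spnorm (Matrix.hadamard (sigM A b x) (sigM A b x)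
        - Matrix.hadamard (sigM A b xh) (sigM A b xh))
      ≤ 6 * β⁻¹ ^ 7 * R ^ 3 * evnorm (x - xh) := by
  set M := matAx A b x with hMdef
  set N := matAx A b xh with hNdef
  have hσdef : sigM A b x = projM M := by unfold sigM projM; rw [hMdef]
  have hτdef : sigM A b xh = projM N := by unfold sigM projM; rw [hNdef]
  set σ := sigM A b x with hσ
  set τ := sigM A b xh with hτ
  set e := evnorm (x - xh) with he
  have e0 : 0 ≤ e := evnorm_nonneg _
  have hβne : β ≠ 0 := ne_of_gt hβ0
  have hβi0 : (0:ℝ) < β⁻¹ := by positivity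
  have hsx0 : ∀ i, sVec A b x i ≠ 0 := fun i =>
    abs_pos.mp (lt_of_lt_of_le hβ0 (hsx i))
  have hsxh0 : ∀ i, sVec A b xh i ≠ 0 := fun i =>
    abs_pos.mp (lt_of_lt_of_le hβ0 (hsxh i))
  have hMx : M = Matrix.diagonal (fun i => (sVec A b x i)⁻¹) * A := by
    rw [hMdef, matAx, diag_inv _ hsx0]
  have hNx : N = Matrix.diagonal (fun i => (sVec A b xh i)⁻¹) * A := by
    rw [hNdef, matAx, diag_inv _ hsxh0]
  have hdxb : ∀ i, |(sVec A b x i)⁻¹| ≤ β⁻¹ := by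
    intro i
    rw [abs_inv]
    exact inv_anti₀ hβ0 (hsx i)
  have hDx : spnorm (Matrix.diagonal (fun i => (sVec A b x i)⁻¹)) ≤ β⁻¹ :=
    spnorm_diagonal_le _ _ hβi0.le hdxb
  -- R ≥ β ^ 2
  have hR2 : β ^ 2 ≤ R := by
    set v : Fin d → ℝ := Pi.single ⟨0, hd⟩ 1 with hv
    have hv1 : evnorm v = 1 := evnorm_single _
    have h1 : β ≤ evnorm (M.mulVec v) := by
      have := hminx v
      rwa [hv1, mul_one] at this
    have h2 : evnorm (M.mulVec v) ≤ β⁻¹ * R := by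
      rw [hMx, ← Matrix.mulVec_mulVec]
      calc evnorm ((Matrix.diagonal (fun i => (sVec A b x i)⁻¹)).mulVec (A.mulVec v))
          ≤ spnorm (Matrix.diagonal (fun i => (sVec A b x i)⁻¹)) * evnorm (A.mulVec v) :=
            mulVec_evnorm_le _ _
        _ ≤ β⁻¹ * evnorm (A.mulVec v) :=
            mul_le_mul_of_nonneg_right hDx (evnorm_nonneg _)
        _ ≤ β⁻¹ * (spnorm A * evnorm v) :=
            mul_le_mul_of_nonneg_left (mulVec_evnorm_le _ _) hβi0.le
        _ = β⁻¹ * spnorm A := by rw [hv1, mul_one]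
        _ ≤ β⁻¹ * R := mul_le_mul_of_nonneg_left hA hβi0.le
    have h3 : β ≤ β⁻¹ * R := le_trans h1 h2
    nlinarith [mul_inv_cancel₀ hβne]
  -- bound on entries of the diagonal difference
  have hAe : evnorm (A.mulVec (x - xh)) ≤ R * e := by
    calc evnorm (A.mulVec (x - xh)) ≤ spnorm A * e := mulVec_evnorm_le _ _
      _ ≤ R * e := mul_le_mul_of_nonneg_right hA e0
  have hdd : ∀ i, |(sVec A b x i)⁻¹ - (sVec A b xh i)⁻¹| ≤ β⁻¹ * β⁻¹ * (R * e) := by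
    intro i
    rw [inv_sub_inv (hsx0 i) (hsxh0 i), abs_div, abs_mul]
    have hnum : |sVec A b xh i - sVec A b x i| ≤ R * e := by
      have heq : sVec A b xh i - sVec A b x i = -((A.mulVec (x - xh)) i) := by
        simp [sVec, Matrix.mulVec_sub, Pi.sub_apply]
      rw [heq, abs_neg]
      exact le_trans (entry_le_evnorm _ i) hAe
    have hden : β * β ≤ |sVec A b x i| * |sVec A b xh i| :=
      mul_le_mul (hsx i) (hsxh i) hβ0.le (abs_nonneg _)
    calc |sVec A b xh i - sVec A b x i| / (|sVec A b x i| * |sVec A b xh i|)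
        ≤ (R * e) / (β * β) := by
          apply div_le_div₀ (by positivity) hnum (by positivity) hden
      _ = β⁻¹ * β⁻¹ * (R * e) := by field_simp
  -- bound on M - N
  have hMN : M - N = Matrix.diagonal
      (fun i => (sVec A b x i)⁻¹ - (sVec A b xh i)⁻¹) * A := by
    rw [hMx, hNx, ← Matrix.sub_mul, Matrix.diagonal_sub]
  have hMNb : spnorm (M - N) ≤ β⁻¹ * β⁻¹ * (R * e) * R := by
    rw [hMN]
    calc spnorm (Matrix.diagonal (fun i => (sVec A b x i)⁻¹ - (sVec A b xh i)⁻¹) * A)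
        ≤ spnorm (Matrix.diagonal (fun i => (sVec A b x i)⁻¹ - (sVec A b xh i)⁻¹))
            * spnorm A := spnorm_mul_le _ _
      _ ≤ (β⁻¹ * β⁻¹ * (R * e)) * R := by
          apply mul_le_mul (spnorm_diagonal_le _ _ (by positivity) hdd) hA
            (spnorm_nonneg _) (by positivity)
  -- bound on σ - τ
  have hdiff : spnorm (σ - τ) ≤ 2 * β⁻¹ * (β⁻¹ * β⁻¹ * (R * e) * R) := by
    rw [hσdef, hτdef]
    calc spnorm (projM M - projM N) ≤ 2 * β⁻¹ * spnorm (M - N) :=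
          proj_diff_bound M N β hβ0 hrankx hrankxh hminx hminxh
      _ ≤ 2 * β⁻¹ * (β⁻¹ * β⁻¹ * (R * e) * R) :=
          mul_le_mul_of_nonneg_left hMNb (by positivity)
  -- projection properties of σ and τ
  have hσsym : σᵀ = σ := projM_symm M
  have hσidem : σ * σ = σ := projM_idem M hrankx
  have hτsym : τᵀ = τ := projM_symm N
  have hτidem : τ * τ = τ := projM_idem N hrankxh
  have hσ1 : spnorm σ ≤ 1 := sym_idem_spnorm σ hσsym hσidem
  have hτ1 : spnorm τ ≤ 1 := sym_idem_spnorm τ hτsym hτidem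
  have hrowσ : ∀ i, ∑ k, σ i k ^ 2 ≤ 1 := by
    intro i
    have h1 : ∑ k, σ i k ^ 2 = (σ * σᵀ) i i := by
      rw [Matrix.mul_apply]
      exact Finset.sum_congr rfl fun k _ => by rw [Matrix.transpose_apply, sq]
    rw [h1, hσsym, hσidem]
    exact le_trans (diag_entry_le_spnorm σ i) hσ1
  have hrowτ : ∀ i, ∑ k, τ i k ^ 2 ≤ 1 := by
    intro i
    have h1 : ∑ k, τ i k ^ 2 = (τ * τᵀ) i i := by
      rw [Matrix.mul_apply]
      exact Finset.sum_congr rfl fun k _ => by rw [Matrix.transpose_apply, sq]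
    rw [h1, hτsym, hτidem]
    exact le_trans (diag_entry_le_spnorm τ i) hτ1
  -- Schur bounds
  have had1 : spnorm (Matrix.hadamard (σ - τ) σ) ≤ spnorm (σ - τ) * 1 := by
    have h := schur_had (σ - τ) σ 1 zero_le_one hrowσ
    rwa [show σ * σᵀ = σ by rw [hσsym, hσidem]] at h
  have had2 : spnorm (Matrix.hadamard τ (σ - τ)) ≤ spnorm (σ - τ) * 1 := by
    rw [Matrix.hadamard_comm]
    have h := schur_had (σ - τ) τ 1 zero_le_one hrowτ
    rwa [show τ * τᵀ = τ by rw [hτsym, hτidem]] at h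
  -- final numeric combination
  have hb1 : (1:ℝ) ≤ β⁻¹ := by
    have h := inv_anti₀ hβ0 (by linarith : β ≤ 1)
    simpa using h
  have hfact : β⁻¹ ^ 3 * R ^ 2 ≤ β⁻¹ ^ 7 * R ^ 3 := by
    have h1 : β⁻¹ ^ 7 * R ^ 2 * β ^ 2 = β⁻¹ ^ 5 * R ^ 2 := by
      field_simp
    calc β⁻¹ ^ 3 * R ^ 2 ≤ β⁻¹ ^ 5 * R ^ 2 :=
          mul_le_mul_of_nonneg_right (pow_le_pow_right₀ hb1 (by norm_num)) (sq_nonneg R)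
      _ = β⁻¹ ^ 7 * R ^ 2 * β ^ 2 := h1.symm
      _ ≤ β⁻¹ ^ 7 * R ^ 2 * R := mul_le_mul_of_nonneg_left hR2 (by positivity)
      _ = β⁻¹ ^ 7 * R ^ 3 := by ring
  calc spnorm (Matrix.hadamard σ σ - Matrix.hadamard τ τ)
      = spnorm (Matrix.hadamard (σ - τ) σ + Matrix.hadamard τ (σ - τ)) := by
        rw [hadamard_decomp]
    _ ≤ spnorm (Matrix.hadamard (σ - τ) σ) + spnorm (Matrix.hadamard τ (σ - τ)) :=
        spnorm_add_le _ _
    _ ≤ spnorm (σ - τ) * 1 + spnorm (σ - τ) * 1 := add_le_add had1 had2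
    _ = 2 * spnorm (σ - τ) := by ring
    _ ≤ 2 * (2 * β⁻¹ * (β⁻¹ * β⁻¹ * (R * e) * R)) :=
        mul_le_mul_of_nonneg_left hdiff (by norm_num)
    _ = 4 * (β⁻¹ ^ 3 * R ^ 2) * e := by ring
    _ ≤ 6 * β⁻¹ ^ 7 * R ^ 3 * e := by
        have h2 : β⁻¹ ^ 3 * R ^ 2 * e ≤ β⁻¹ ^ 7 * R ^ 3 * e :=
          mul_le_mul_of_nonneg_right hfact e0
        have h3 : 0 ≤ β⁻¹ ^ 7 * R ^ 3 * e := by positivity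
        have h4 : 0 ≤ β⁻¹ ^ 3 * R ^ 2 * e := by positivity
        linarith
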